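/- The torsion subgroup of the elliptic curve E over ℚ given by y² + xy + y = x³ is isomorphic to ℤ/3ℤ, generated by the point (0,0); in particular (0,0) and (0,-1) are the points of exact order 3 and (0,0) + (0,0) = (0,-1). -/

import Mathlib

/-- The elliptic curve `E : y² + xy + y = x³` over `ℚ`. -/
def Ecurve : WeierstrassCurve ℚ := ⟨1, 0, 1, 0, 0⟩

lemma Ecurve_ns00 : Ecurve.toAffine.Nonsingular 0 0 := by
  simp [WeierstrassCurve.Affine.nonsingular_iff, WeierstrassCurve.Affine.equation_iff, Ecurve]

lemma Ecurve_ns0m1 : Ecurve.toAffine.Nonsingular 0 (-1) := by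
  simp [WeierstrassCurve.Affine.nonsingular_iff, WeierstrassCurve.Affine.equation_iff, Ecurve]

/-- The rational point `(0, 0)` on `E`. -/
noncomputable def P00 : Ecurve.toAffine.Point := WeierstrassCurve.Affine.Point.some _ _ Ecurve_ns00

/-- The rational point `(0, -1)` on `E`. -/
noncomputable def P0m1 : Ecurve.toAffine.Point := WeierstrassCurve.Affine.Point.some _ _ Ecurve_ns0m1

/-!
Let `h` be the naive height of the `x`-coordinate. Clearing denominators in the duplication formula
`x(2P) = Φ₂(x) / ψ₂²(x)` gives two binary quartics in `(num x, den x)` whose resultant is `26`;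
this bounds the cancellation in `x(2P)` and yields `h(P)⁴ ≤ 136 h(2P)`. So `h` strictly grows under
doubling once `h(P) ≥ 6`, which fails at a point of maximal height in the finite group generated
by a torsion point.
A torsion point therefore has `h(P) < 6`, and among these `x`-coordinates only `x = 0` makes the
discriminant `ψ₂²(x) = (2y + x + 1)²` a rational square; the points with `x = 0` are `(0, 0)` and
`(0, -1) = -(0, 0)`.
-/

open WeierstrassCurve.Affine WeierstrassCurve.Affine.Point Height

theorem IsOfFinAddOrder.lt_of_forall_le_imp_lt_add_self {G α : Type*} [AddGroup G]
    [LinearOrder α] {f : G → α} {N : α} (hgrow : ∀ R, N ≤ f R → f R < f (R + R)) {Q : G}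
    (hQ : IsOfFinAddOrder Q) : f Q < N := by
  obtain ⟨R, hR, hmax⟩ := Set.exists_max_image _ f hQ.finite_zmultiples
    ⟨Q, AddSubgroup.mem_zmultiples Q⟩
  by_contra! hQN
  exact (hgrow R (hQN.trans (hmax Q (AddSubgroup.mem_zmultiples Q)))).not_ge
    (hmax _ (add_mem hR hR))

lemma Rat.mulHeight₁_eq_max_abs (q : ℚ) : mulHeight₁ q = ((max |q.num| q.den : ℤ) : ℝ) := by
  rw [Rat.mulHeight₁_eq_max]
  push_cast [Nat.cast_natAbs]
  rfl

lemma Rat.max_abs_le_mul_max_abs_num_den_div {F G D : ℤ} (hG : G ≠ 0)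
    (hdvd : ∀ c, c ∣ F → c ∣ G → c ∣ D) (hD : D ≠ 0) :
    max |F| |G| ≤ |D| * max |(F / G : ℚ).num| (F / G : ℚ).den := by
  obtain ⟨c, hF, hG'⟩ := Rat.exists_eq_mul_div_num_and_eq_mul_div_den F hG
  have hc : |c| ≤ |D| :=
    Int.le_of_dvd (abs_pos.mpr hD) <| (abs_dvd_abs _ _).mpr <| hdvd c ⟨_, hF⟩ ⟨_, hG'⟩
  generalize ((F / G : ℚ)) = q at hF hG' ⊢
  rw [hF, hG', abs_mul, abs_mul, ← mul_max_of_nonneg _ _ (abs_nonneg c), Nat.abs_cast]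
  exact mul_le_mul_of_nonneg_right hc (by positivity)

lemma abs_cubic_form_le {R : Type*} [CommRing R] [LinearOrder R] [IsStrictOrderedRing R]
    {a b M : R} (ha : |a| ≤ M) (hb : |b| ≤ M) (c₃ c₂ c₁ c₀ : R) :
    |c₃ * a ^ 3 + c₂ * a ^ 2 * b + c₁ * a * b ^ 2 + c₀ * b ^ 3| ≤
      (|c₃| + |c₂| + |c₁| + |c₀|) * M ^ 3 := by
  have hterm : ∀ c i j, i + j = 3 → |c * (a ^ i * b ^ j)| ≤ |c| * M ^ 3 := by
    intro c i j hij
    rw [abs_mul, abs_mul, abs_pow, abs_pow, ← hij, pow_add]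
    refine mul_le_mul_of_nonneg_left (mul_le_mul (pow_le_pow_left₀ (abs_nonneg a) ha i)
      (pow_le_pow_left₀ (abs_nonneg b) hb j) (by positivity) ?_) (abs_nonneg c)
    exact pow_nonneg ((abs_nonneg a).trans ha) i
  have hsplit : c₃ * a ^ 3 + c₂ * a ^ 2 * b + c₁ * a * b ^ 2 + c₀ * b ^ 3 =
      c₃ * (a ^ 3 * b ^ 0) + c₂ * (a ^ 2 * b ^ 1) + c₁ * (a ^ 1 * b ^ 2) + c₀ * (a ^ 0 * b ^ 3) := by
    ring
  rw [hsplit]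
  have h₁ := abs_add_le (c₃ * (a ^ 3 * b ^ 0) + c₂ * (a ^ 2 * b ^ 1)) (c₁ * (a ^ 1 * b ^ 2))
  have h₂ := abs_add_le (c₃ * (a ^ 3 * b ^ 0)) (c₂ * (a ^ 2 * b ^ 1))
  refine (abs_add_le _ _).trans ?_
  linarith [hterm c₃ 3 0 rfl, hterm c₂ 2 1 rfl, hterm c₁ 1 2 rfl, hterm c₀ 0 3 rfl]

namespace Ecurve

lemma equation_iff (x y : ℚ) : Ecurve.toAffine.Equation x y ↔ y ^ 2 + x * y + y = x ^ 3 := by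
  rw [WeierstrassCurve.Affine.equation_iff]
  simp [Ecurve]

lemma negY_eq (x y : ℚ) : Ecurve.toAffine.negY x y = -y - x - 1 := by
  simp [negY, Ecurve]

lemma P00_add_P00 : P00 + P00 = P0m1 := by
  have hy : (0 : ℚ) ≠ Ecurve.toAffine.negY 0 0 := by rw [negY_eq]; norm_num
  rw [P00, P0m1, add_self_of_Y_ne hy]
  simp [addX, addY, negAddY, negY, Ecurve]

lemma P0m1_add_P00 : P0m1 + P00 = 0 :=
  add_of_Y_eq rfl (by rw [negY_eq]; norm_num)

lemma P0m1_eq_neg_P00 : P0m1 = -P00 := eq_neg_of_add_eq_zero_left P0m1_add_P00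

lemma addOrderOf_P00 : addOrderOf P00 = 3 := by
  have : Fact (Nat.Prime 3) := ⟨Nat.prime_three⟩
  refine addOrderOf_eq_prime ?_ (some_ne_zero _)
  rw [succ_nsmul, two_nsmul, P00_add_P00, P0m1_add_P00]

lemma addOrderOf_P0m1 : addOrderOf P0m1 = 3 := by
  rw [P0m1_eq_neg_P00, addOrderOf_neg, addOrderOf_P00]

/-- `doubleNum a b` and `doubleDen a b` are `b⁴ Φ₂(a / b)` and `b⁴ ψ₂²(a / b)`, so that
`x(2P) = doubleNum a b / doubleDen a b` when `x(P) = a / b`. -/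
def doubleNum (a b : ℤ) : ℤ := a ^ 4 - a ^ 2 * b ^ 2 - 2 * a * b ^ 3

def doubleDen (a b : ℤ) : ℤ := 4 * a ^ 3 * b + a ^ 2 * b ^ 2 + 2 * a * b ^ 3 + b ^ 4

lemma doubleNum_cast (x : ℚ) :
    (doubleNum x.num x.den : ℚ) = (x.den : ℚ) ^ 4 * (x ^ 4 - x ^ 2 - 2 * x) := by
  rw [doubleNum]
  push_cast
  rw [← Rat.mul_den_eq_num]
  ring

lemma doubleDen_cast (x : ℚ) :
    (doubleDen x.num x.den : ℚ) = (x.den : ℚ) ^ 4 * (4 * x ^ 3 + x ^ 2 + 2 * x + 1) := by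
  rw [doubleDen]
  push_cast
  rw [← Rat.mul_den_eq_num]
  ring

lemma doubleDen_ne_zero {a b : ℤ} (hab : IsCoprime a b) (hb : 0 < b) : doubleDen a b ≠ 0 := by
  intro h
  have hcubic : 4 * a ^ 3 + a ^ 2 * b + 2 * a * b ^ 2 + b ^ 3 = 0 := by
    have : b * (4 * a ^ 3 + a ^ 2 * b + 2 * a * b ^ 2 + b ^ 3) = 0 := by
      rw [← h, doubleDen]; ring
    exact (mul_eq_zero.mp this).resolve_left hb.ne'
  have ha : IsUnit a := (hab.pow_right (n := 3)).isUnit_of_dvd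
    ⟨-(4 * a ^ 2 + a * b + 2 * b ^ 2), by linear_combination hcubic⟩
  have hb4 : b ∣ 4 := (hab.symm.pow_right (n := 3)).dvd_of_dvd_mul_right
    ⟨-(a ^ 2 + 2 * a * b + b ^ 2), by linear_combination hcubic⟩
  have hb4' : b ≤ 4 := Int.le_of_dvd (by norm_num) hb4
  rcases Int.isUnit_iff.mp ha with rfl | rfl <;> interval_cases b <;> omega

-- `26` is the resultant of the binary quartics `doubleNum` and `doubleDen`.

lemma resultant_mul_pow_seven_left (a b : ℤ) :
    26 * a ^ 7 = (26 * a ^ 3 + 4 * a ^ 2 * b + 11 * a * b ^ 2 + 6 * b ^ 3) * doubleNum a b +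
      (-a ^ 3 + 4 * a ^ 2 * b + 12 * a * b ^ 2) * doubleDen a b := by
  simp only [doubleNum, doubleDen]; ring

lemma resultant_mul_pow_seven_right (a b : ℤ) :
    26 * b ^ 7 = (48 * a ^ 2 * b + 8 * a * b ^ 2 + 31 * b ^ 3) * doubleNum a b +
      (-12 * a ^ 3 + a ^ 2 * b + 10 * a * b ^ 2 + 26 * b ^ 3) * doubleDen a b := by
  simp only [doubleNum, doubleDen]; ring

lemma dvd_26_of_dvd_doubleNum_of_dvd_doubleDen {a b c : ℤ} (hab : IsCoprime a b)
    (hF : c ∣ doubleNum a b) (hG : c ∣ doubleDen a b) : c ∣ 26 := by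
  have ha : c ∣ 26 * a ^ 7 := by
    rw [resultant_mul_pow_seven_left]; exact dvd_add (hF.mul_left _) (hG.mul_left _)
  have hb : c ∣ 26 * b ^ 7 := by
    rw [resultant_mul_pow_seven_right]; exact dvd_add (hF.mul_left _) (hG.mul_left _)
  obtain ⟨u, v, huv⟩ : IsCoprime (a ^ 7) (b ^ 7) := hab.pow
  rw [show (26 : ℤ) = u * (26 * a ^ 7) + v * (26 * b ^ 7) by linear_combination -26 * huv]
  exact dvd_add (ha.mul_left _) (hb.mul_left _)

lemma pow_four_le_max_abs_doubleNum_doubleDen (a b : ℤ) :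
    13 * max |a| |b| ^ 4 ≤ 68 * max |doubleNum a b| |doubleDen a b| := by
  set M := max |a| |b|
  set K := max |doubleNum a b| |doubleDen a b|
  have ha : |a| ≤ M := le_max_left _ _
  have hb : |b| ≤ M := le_max_right _ _
  have hK : 0 ≤ K := (abs_nonneg _).trans (le_max_left _ _)
  have hcomb : ∀ z u v p q : ℤ, z = u * doubleNum a b + v * doubleDen a b →
      |u| ≤ p * M ^ 3 → |v| ≤ q * M ^ 3 → |z| ≤ (p + q) * M ^ 3 * K := by
    rintro z u v p q rfl hu hv
    refine (abs_add_le _ _).trans ?_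
    rw [abs_mul, abs_mul, add_mul, add_mul]
    exact add_le_add (mul_le_mul hu (le_max_left _ _) (abs_nonneg _) ((abs_nonneg u).trans hu))
      (mul_le_mul hv (le_max_right _ _) (abs_nonneg _) ((abs_nonneg v).trans hv))
  have ha7 : 26 * |a| ^ 7 ≤ 136 * M ^ 3 * K := by
    have h := hcomb _ _ _ 47 17 (resultant_mul_pow_seven_left a b)
      (by simpa using abs_cubic_form_le ha hb 26 4 11 6)
      (by simpa using abs_cubic_form_le ha hb (-1) 4 12 0)
    rw [abs_mul, abs_pow] at h
    norm_num at h
    nlinarith [pow_nonneg ((abs_nonneg a).trans ha) 3]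
  have hb7 : 26 * |b| ^ 7 ≤ 136 * M ^ 3 * K := by
    have h := hcomb _ _ _ 87 49 (resultant_mul_pow_seven_right a b)
      (by simpa using abs_cubic_form_le ha hb 0 48 8 31)
      (by simpa using abs_cubic_form_le ha hb (-12) 1 10 26)
    rw [abs_mul, abs_pow] at h
    norm_num at h
    linarith
  have hM7 : 26 * M ^ 7 ≤ 136 * M ^ 3 * K := by
    rcases (max_choice |a| |b|).imp (congrArg (· ^ 7)) (congrArg (· ^ 7)) with h | h <;>
      rw [h] <;> assumption
  rcases ((abs_nonneg a).trans ha).eq_or_lt with hM | hM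
  · rw [← hM]; positivity
  · refine le_of_mul_le_mul_left ?_ (by positivity : 0 < 2 * M ^ 3)
    linarith [show 2 * M ^ 3 * (13 * M ^ 4) = 26 * M ^ 7 by ring]

lemma mulHeight₁_pow_four_le (x : ℚ) :
    mulHeight₁ x ^ 4 ≤ 136 * mulHeight₁ ((doubleNum x.num x.den : ℚ) / doubleDen x.num x.den) := by
  have hden : (0 : ℤ) < x.den := mod_cast x.pos
  have hX := Rat.max_abs_le_mul_max_abs_num_den_div
    (doubleDen_ne_zero x.isCoprime_num_den hden)
    (fun _ => dvd_26_of_dvd_doubleNum_of_dvd_doubleDen x.isCoprime_num_den) (by norm_num)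
  have hx := pow_four_le_max_abs_doubleNum_doubleDen x.num x.den
  rw [abs_of_pos hden] at hx
  rw [abs_of_pos (by norm_num : (0 : ℤ) < 26)] at hX
  generalize ((doubleNum x.num x.den : ℚ) / doubleDen x.num x.den) = X at hX ⊢
  rw [Rat.mulHeight₁_eq_max_abs, Rat.mulHeight₁_eq_max_abs]
  exact_mod_cast (by linarith : max |x.num| x.den ^ 4 ≤ 136 * max |X.num| X.den)

lemma sq_den_sq_mul_two_mul_Y_add {x y : ℚ} (h : Ecurve.toAffine.Equation x y) :
    ((x.den : ℚ) ^ 2 * (2 * y + x + 1)) ^ 2 = doubleDen x.num x.den := by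
  rw [equation_iff] at h
  rw [doubleDen_cast]
  linear_combination 4 * (x.den : ℚ) ^ 4 * h

lemma Y_ne_negY {x y : ℚ} (h : Ecurve.toAffine.Equation x y) : y ≠ Ecurve.toAffine.negY x y := by
  intro hy
  rw [negY_eq] at hy
  apply doubleDen_ne_zero x.isCoprime_num_den (mod_cast x.pos)
  have h0 : (doubleDen x.num x.den : ℚ) = 0 := by
    rw [← sq_den_sq_mul_two_mul_Y_add h, show 2 * y + x + 1 = 0 by linarith]
    ring
  exact_mod_cast h0

lemma addX_slope_self {x y : ℚ} (h : Ecurve.toAffine.Equation x y) :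
    Ecurve.toAffine.addX x x (Ecurve.toAffine.slope x x y y) =
      (doubleNum x.num x.den : ℚ) / doubleDen x.num x.den := by
  have hw : 2 * y + x + 1 ≠ 0 := by
    intro hw; exact Y_ne_negY h (by rw [negY_eq]; linarith)
  have hden : (x.den : ℚ) ≠ 0 := mod_cast x.den_nz
  have hG : 4 * x ^ 3 + x ^ 2 + 2 * x + 1 ≠ 0 := by
    intro hG
    apply hw
    have := sq_den_sq_mul_two_mul_Y_add h
    rw [doubleDen_cast, hG, mul_zero, mul_pow] at this
    simpa [hden] using this
  rw [slope_of_Y_ne rfl (Y_ne_negY h), doubleNum_cast, doubleDen_cast,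
    mul_div_mul_left _ _ (pow_ne_zero 4 hden), addX, negY_eq, eq_div_iff hG,
    show y - (-y - x - 1) = 2 * y + x + 1 by ring]
  simp only [Ecurve]
  field_simp
  linear_combination ((-1 - 8 * x) * (4 * x ^ 3 + x ^ 2 + 2 * x + 1) - 4 * x * (x ^ 3 - x - 2)) *
    (equation_iff x y).mp h

noncomputable def xHeight : Ecurve.toAffine.Point → ℝ
  | .zero => 0
  | .some x _ _ => mulHeight₁ x

lemma xHeight_lt_add_self {P : Ecurve.toAffine.Point} (hP : 6 ≤ xHeight P) :
    xHeight P < xHeight (P + P) := by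
  cases P with
  | zero => simp only [xHeight] at hP; norm_num at hP
  | @some x y h =>
    rw [add_self_of_Y_ne (Y_ne_negY h.1)]
    simp only [xHeight] at hP ⊢
    rw [addX_slope_self h.1]
    have h216 : 216 * mulHeight₁ x ≤ mulHeight₁ x ^ 4 := by
      have : (6 : ℝ) ^ 3 ≤ mulHeight₁ x ^ 3 := pow_le_pow_left₀ (by norm_num) hP 3
      nlinarith
    linarith [mulHeight₁_pow_four_le x]

lemma eq_zero_of_isSquare_doubleDen :
    ∀ a ∈ Finset.Icc (-5 : ℤ) 5, ∀ b ∈ Finset.Icc (1 : ℤ) 5, IsSquare (doubleDen a b) → a = 0 := by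
  decide +kernel

lemma X_eq_zero_of_mulHeight₁_lt {x y : ℚ} (h : Ecurve.toAffine.Equation x y)
    (hx : mulHeight₁ x < 6) : x = 0 := by
  have hsq : IsSquare (doubleDen x.num x.den) :=
    Rat.isSquare_intCast_iff.mp ⟨_, (sq_den_sq_mul_two_mul_Y_add h).symm.trans (sq _)⟩
  rw [Rat.mulHeight₁_eq_max] at hx
  have hx' : max x.num.natAbs x.den < 6 := mod_cast hx
  have hnum := (le_max_left _ _).trans_lt hx'
  have hden := (le_max_right _ _).trans_lt hx'
  have hden_pos := x.pos
  rw [← Rat.num_eq_zero]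
  refine eq_zero_of_isSquare_doubleDen _ ?_ _ ?_ hsq <;> rw [Finset.mem_Icc] <;> omega

lemma mem_zmultiples_P00_of_isOfFinAddOrder {Q : Ecurve.toAffine.Point}
    (hQ : IsOfFinAddOrder Q) : Q ∈ AddSubgroup.zmultiples P00 := by
  cases Q with
  | zero => exact zero_mem _
  | @some x y h =>
    obtain rfl : x = 0 := X_eq_zero_of_mulHeight₁_lt h.1
      (hQ.lt_of_forall_le_imp_lt_add_self (f := xHeight) fun _ => xHeight_lt_add_self)
    have hy : y * (y + 1) = 0 := by linear_combination (equation_iff 0 y).mp h.1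
    rcases mul_eq_zero.mp hy with rfl | hy
    · exact AddSubgroup.mem_zmultiples P00
    · obtain rfl : y = -1 := by linarith
      change P0m1 ∈ _
      exact P0m1_eq_neg_P00 ▸ neg_mem (AddSubgroup.mem_zmultiples P00)

lemma torsion_eq_zmultiples_P00 :
    AddCommGroup.torsion Ecurve.toAffine.Point = AddSubgroup.zmultiples P00 := by
  refine le_antisymm (fun Q hQ => mem_zmultiples_P00_of_isOfFinAddOrder hQ) ?_
  rw [AddSubgroup.zmultiples_le, AddCommGroup.mem_torsion, ← addOrderOf_pos_iff, addOrderOf_P00]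
  norm_num

end Ecurve

/-- The torsion subgroup of the elliptic curve `E : y² + xy + y = x³` over `ℚ` is
isomorphic to `ℤ/3ℤ` and is generated by `(0,0)`; the points `(0,0)` and `(0,-1)` have
exact order `3`, and `(0,0) + (0,0) = (0,-1)`. -/
theorem Ecurve_torsion :
    addOrderOf P00 = 3 ∧ addOrderOf P0m1 = 3 ∧ P00 + P00 = P0m1 ∧
      AddCommGroup.torsion Ecurve.toAffine.Point = AddSubgroup.zmultiples P00 ∧
      Nonempty (AddCommGroup.torsion Ecurve.toAffine.Point ≃+ ZMod 3) := by
  refine ⟨Ecurve.addOrderOf_P00, Ecurve.addOrderOf_P0m1, Ecurve.P00_add_P00,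
    Ecurve.torsion_eq_zmultiples_P00, ?_⟩
  rw [Ecurve.torsion_eq_zmultiples_P00]
  have e := zmodAddCyclicAddEquiv (inferInstance : IsAddCyclic (AddSubgroup.zmultiples P00))
  rw [Nat.card_zmultiples, Ecurve.addOrderOf_P00] at e
  exact ⟨e.symm⟩
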